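/- Let n ≥ 2 and let O_n be the monoid of order-preserving transformations of {1,…,n}, viewed as a submonoid of PP_n^fd. Then: (1) (D_n, O_n) is a strong right action pair in PP_n^fd, i.e. (A1) D_n f ⊆ f D_n for all f ∈ O_n, and (A2) for u,v ∈ D_n and f,g ∈ O_n, fu = gv implies u = v; (2) PP_n^fd = O_n D_n, i.e. every a ∈ PP_n^fd factors as a = f d_η for some f ∈ O_n and some planar equivalence η (indeed with η = coker(a)). -/

import Mathlib

open scoped Classical

namespace PaperFDP

/-- Vertex set of a partition diagram: `inl x` is the upper vertex `x`,
`inr x` is the lower vertex `x'`. -/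
abbrev V (n : ℕ) := Fin n ⊕ Fin n

/-- A partition in `P_n`: a set partition of the `2n` points, encoded as an
equivalence relation (a `Setoid`). -/
abbrev Ptn (n : ℕ) := Setoid (V n)

/-- Three-row vertex set (upper ⊕ (middle ⊕ lower)) used for the product graph. -/
abbrev W3 (n : ℕ) := Fin n ⊕ (Fin n ⊕ Fin n)

/-- Embedding of `a`'s vertices: upper row stays, lower row goes to the middle row. -/
def upMid {n : ℕ} : V n → W3 n :=
  Sum.elim Sum.inl fun x => Sum.inr (Sum.inl x)

/-- Embedding of `b`'s vertices: upper row goes to the middle row, lower row stays. -/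
def midLow {n : ℕ} : V n → W3 n :=
  Sum.elim (fun x => Sum.inr (Sum.inl x)) fun x => Sum.inr (Sum.inr x)

/-- Embedding of the outer (upper and lower) rows into the three-row vertex set. -/
def outer {n : ℕ} : V n → W3 n :=
  Sum.elim Sum.inl fun x => Sum.inr (Sum.inr x)

/-- The edge relation of the product graph `Π(a,b)`. -/
def joinRel {n : ℕ} (a b : Ptn n) (u v : W3 n) : Prop :=
  (∃ p q : V n, a.r p q ∧ upMid p = u ∧ upMid q = v) ∨
  (∃ p q : V n, b.r p q ∧ midLow p = u ∧ midLow q = v)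

/-- The product of two partitions: `x,y` lie in the same block of `a*b` iff they are
connected in the product graph. -/
def pmul {n : ℕ} (a b : Ptn n) : Ptn n :=
  Setoid.comap outer (Relation.EqvGen.setoid (joinRel a b))

/-- The identity partition, with blocks `{x, x'}`. -/
def onePtn (n : ℕ) : Ptn n := Setoid.ker (Sum.elim id id)

/-- The partition of a transformation `f` (written on the right): `x` is joined to `(x f)'`. -/
def toPtn {n : ℕ} (f : Fin n → Fin n) : Ptn n := Setoid.ker (Sum.elim f id)

/-- `id_ε`, the partition with blocks `A ∪ A'` for the `ε`-classes `A`. -/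
def idOf {n : ℕ} (ε : Setoid (Fin n)) : Ptn n := Setoid.comap (Sum.elim id id) ε

/-- The kernel of a partition. -/
def kerP {n : ℕ} (a : Ptn n) : Setoid (Fin n) := Setoid.comap Sum.inl a

/-- The cokernel of a partition. -/
def cokerP {n : ℕ} (a : Ptn n) : Setoid (Fin n) := Setoid.comap Sum.inr a

/-- `a` has full domain: every upper point is in a block meeting the lower row. -/
def FullDom {n : ℕ} (a : Ptn n) : Prop :=
  ∀ x : Fin n, ∃ y : Fin n, a.r (Sum.inl x) (Sum.inr y)

/-- The full-domain partition monoid `P_n^fd` as a subset of `P_n`. -/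
def Pfd (n : ℕ) : Set (Ptn n) := {a | FullDom a}

/-- `a` is (the partition of) a permutation, i.e. a unit of `P_n`. -/
def IsPermPtn {n : ℕ} (a : Ptn n) : Prop := ∃ g : Equiv.Perm (Fin n), a = toPtn ⇑g

/-- The singular ideal `Sing(P_n^fd) = P_n^fd ∖ S_n`. -/
def SingPfd (n : ℕ) : Set (Ptn n) := {a | FullDom a ∧ ¬ IsPermPtn a}

/-- The boundary linear order on the `2n` vertices: `1 < … < n < n' < … < 1'`. -/
def ordV {n : ℕ} : V n → ℕ :=
  Sum.elim (fun x => (x : ℕ)) fun x => 2 * n - 1 - (x : ℕ)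

/-- `a` is planar: it can be drawn without crossings, equivalently it is
non-crossing with respect to the boundary order on the `2n` vertices. -/
def Planar {n : ℕ} (a : Ptn n) : Prop :=
  ∀ p q r s : V n, ordV p < ordV q → ordV q < ordV r → ordV r < ordV s →
    a.r p r → a.r q s → a.r p q

/-- The planar full-domain partition monoid `PP_n^fd` as a subset of `P_n`. -/
def PPfd (n : ℕ) : Set (Ptn n) := {a | FullDom a ∧ Planar a}

/-- `η_ij`: the equivalence on `{1,…,n}` whose only nontrivial class is `{i,j}`. -/
def etaOf {n : ℕ} (i j : Fin n) : Setoid (Fin n) :=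
  Setoid.ker fun x => if x = j then i else x

/-- `ē_ij = id_{η_ij}`: the partition with block `{i,j,i',j'}` and blocks `{x,x'}` otherwise. -/
def ebar {n : ℕ} (i j : Fin n) : Ptn n := idOf (etaOf i j)

/-- `t̄_ij`: the transformation sending `j ↦ i` and fixing everything else, as a partition. -/
def tbar {n : ℕ} (i j : Fin n) : Ptn n := toPtn fun x => if x = j then i else x

/-- Evaluation of a word as a genuine (semi)group product of partitions
(the empty word evaluates to the identity partition). -/
def evalWith {A : Type*} {n : ℕ} (g : A → Ptn n) : List A → Ptn n
  | [] => onePtn n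
  | [x] => g x
  | x :: y :: w => pmul (g x) (evalWith g (y :: w))

/-- One-step rewriting using a relation from `R`, in an arbitrary context. -/
def OneStep {A : Type*} (R : List A → List A → Prop) (w w' : List A) : Prop :=
  ∃ u v p q : List A, R p q ∧ w = u ++ p ++ v ∧ w' = u ++ q ++ v

/-- The congruence on the free monoid (or free semigroup) generated by `R`. -/
def PresCong {A : Type*} (R : List A → List A → Prop) : List A → List A → Prop :=
  Relation.EqvGen (OneStep R)

end PaperFDP

namespace PaperFDP

/-- The `ε`-class of `x`, as a set. -/
def clsS {n : ℕ} (ε : Setoid (Fin n)) (x : Fin n) : Set (Fin n) := {y | ε.r x y}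

/-- Two sets are separated if one lies entirely below the other. -/
def SepSets {n : ℕ} (A B : Set (Fin n)) : Prop :=
  (∀ a ∈ A, ∀ b ∈ B, a < b) ∨ (∀ a ∈ A, ∀ b ∈ B, b < a)

/-- `A` is nested by `B`: all of `A` lies strictly between two consecutive elements of `B`. -/
def NestedBy {n : ℕ} (A B : Set (Fin n)) : Prop :=
  ∃ b₁ ∈ B, ∃ b₂ ∈ B, b₁ < b₂ ∧ (∀ b ∈ B, ¬ (b₁ < b ∧ b < b₂)) ∧
    ∀ a ∈ A, b₁ < a ∧ a < b₂

/-- An equivalence is planar if any two of its classes are nested or separated. -/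
def IsPlanarEq {n : ℕ} (ε : Setoid (Fin n)) : Prop :=
  ∀ x y : Fin n, ¬ ε.r x y →
    SepSets (clsS ε x) (clsS ε y) ∨ NestedBy (clsS ε x) (clsS ε y) ∨
      NestedBy (clsS ε y) (clsS ε x)

/-- The class of `x` is un-nested (nested by no other class). -/
def Unnested {n : ℕ} (ε : Setoid (Fin n)) (x : Fin n) : Prop :=
  ∀ y : Fin n, ¬ NestedBy (clsS ε x) (clsS ε y)

/-- The minimum of the `ε`-class of `x`. -/
noncomputable def minCl {n : ℕ} (ε : Setoid (Fin n)) (x : Fin n) : Fin n :=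
  (Finset.univ.filter fun y => ε.r x y).min'
    ⟨x, Finset.mem_filter.mpr ⟨Finset.mem_univ x, ε.iseqv.refl x⟩⟩

/-- The maximum of the `ε`-class of `x`. -/
noncomputable def maxCl {n : ℕ} (ε : Setoid (Fin n)) (x : Fin n) : Fin n :=
  (Finset.univ.filter fun y => ε.r x y).max'
    ⟨x, Finset.mem_filter.mpr ⟨Finset.mem_univ x, ε.iseqv.refl x⟩⟩

/-- The minima of the un-nested `ε`-classes. -/
noncomputable def anchorsF {n : ℕ} (ε : Setoid (Fin n)) : Finset (Fin n) :=
  Finset.univ.filter fun y => Unnested ε y ∧ minCl ε y = y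

/-- The largest minimum-of-an-un-nested-class that is `≤ x`.  (For a planar
equivalence this always exists; junk default otherwise.) -/
noncomputable def anchorBelow {n : ℕ} [NeZero n] (ε : Setoid (Fin n)) (x : Fin n) : Fin n :=
  if h : ((anchorsF ε).filter (· ≤ x)).Nonempty then ((anchorsF ε).filter (· ≤ x)).max' h
  else 0

/-- The "block" map defining `d_η`: an upper vertex `x` goes to the interval
`A_i = [min B_i, max B_i]` (of the un-nested class `B_i`) containing it; a lower
vertex `x'` goes to the `η`-class of `x`.  Blocks are labelled by the minimum of
the corresponding un-nested class, resp. class. -/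
noncomputable def dMap {n : ℕ} [NeZero n] (ε : Setoid (Fin n)) : V n → Fin n :=
  Sum.elim (fun x => anchorBelow ε x) fun x => minCl ε x

/-- The partition `d_η ∈ PP_n^fd`, with blocks `A_i ∪ B_i'` for the un-nested
`η`-classes `B_i` (where `A_i = [min B_i, max B_i]`), and `C'` for the nested
`η`-classes `C`. -/
noncomputable def dEta {n : ℕ} [NeZero n] (ε : Setoid (Fin n)) : Ptn n :=
  Setoid.ker (dMap ε)

/-- `h̄_ij = d_{η_ij}`. -/
noncomputable def hbar {n : ℕ} [NeZero n] (i j : Fin n) : Ptn n := dEta (etaOf i j)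

/-- The monoid `D_n = {d_η : η a planar equivalence}`, as a subset of `PP_n^fd`. -/
def DSet (n : ℕ) [NeZero n] : Set (Ptn n) :=
  {a | ∃ ε : Setoid (Fin n), IsPlanarEq ε ∧ a = dEta ε}

end PaperFDP

namespace PaperFDP

/-!
The product `f · a` with a transformation on the left is `a` pulled back along `Sum.map f id`, and a
full-domain partition is determined by its cokernel together with a transversal. Hence
`coker (f d_η) = η`, which is (A2). The partition `d_η f` has transversal
`x ↦ f (min of the un-nested class whose hull contains x)` and cokernel the image `η.map f`.
That image is again planar: arcs of `η` pushed along a monotone map can only cross inside a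
class, and the equivalence they generate is then noncrossing. Un-nested classes of `η` are
sent into un-nested classes, because nesting one would need a single arc jumping over it. This
identifies `d_η f` with `f d_{η.map f}`, giving (A1). For (2), planarity of `a` makes the
transversal of class minima monotone and puts its values into un-nested classes.
-/

open Relation

theorem _root_.Relation.ReflTransGen.exists_exit {β : Type*} {R : β → β → Prop} {P : β → Prop}
    {x y : β} (h : ReflTransGen R x y) (hx : P x) (hy : ¬ P y) :
    ∃ u v, ReflTransGen R x u ∧ R u v ∧ P u ∧ ¬ P v := by
  induction h with
  | refl => exact absurd hx hy
  | @tail z y hxz hzy ih =>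
    by_cases hz : P z
    · exact ⟨z, y, hxz, hzy, hz, hy⟩
    · exact ih hz

section Noncrossing

variable {α : Type*} [LinearOrder α]

def IsNoncrossing (r : α → α → Prop) : Prop :=
  ∀ ⦃a b c d : α⦄, a < b → b < c → c < d → r a c → r b d → r a b

variable {R : α → α → Prop}

theorem exists_step_across {x y b : α} (h : ReflTransGen R x y) (hxb : x < b) (hby : b < y)
    (hnxb : ¬ ReflTransGen R x b) :
    ∃ u u', ReflTransGen R x u ∧ R u u' ∧ u < b ∧ b < u' := by
  obtain ⟨u, u', hxu, huu', hub, hu'⟩ := h.exists_exit (P := (· < b)) hxb (not_lt.2 hby.le)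
  refine ⟨u, u', hxu, huu', hub, lt_of_le_of_ne (not_lt.1 hu') ?_⟩
  rintro rfl
  exact hnxb (hxu.tail huu')

/-- Leaving the arc `(u, u')` would take an arc of `R` crossing it. -/
theorem mem_Ioo_of_reflTransGen_of_crossing [Std.Symm R]
    (hR : ∀ ⦃a b c d : α⦄, a < b → b < c → c < d → R a c → R b d → ReflTransGen R a b)
    {u u' v w : α} (huu' : R u u') (huv : u < v) (hvu' : v < u')
    (hnuv : ¬ ReflTransGen R u v) (hvw : ReflTransGen R v w) : w ∈ Set.Ioo u u' := by
  by_contra hw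
  obtain ⟨z, z', hvz, hzz', ⟨huz, hzu'⟩, hz'⟩ :=
    hvw.exists_exit (P := fun w => u < w ∧ w < u') ⟨huv, hvu'⟩ hw
  refine hnuv (ReflTransGen.trans ?_ (Std.Symm.symm _ _ hvz))
  have hz'z : ReflTransGen R z' z := .single (Std.Symm.symm _ _ hzz')
  rcases lt_trichotomy z' u with hz'u | rfl | hz'u
  · exact (Std.Symm.symm _ _ (hR hz'u huz hzu' (Std.Symm.symm _ _ hzz') huu')).trans hz'z
  · exact hz'z
  · rcases (not_lt.1 fun h => hz' ⟨hz'u, h⟩).lt_or_eq with hu'z' | rfl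
    · exact hR huz hzu' hu'z' huu' hzz'
    · exact (ReflTransGen.single huu').trans hz'z

theorem isNoncrossing_reflTransGen [Std.Symm R]
    (hR : ∀ ⦃a b c d : α⦄, a < b → b < c → c < d → R a c → R b d → ReflTransGen R a b) :
    IsNoncrossing (ReflTransGen R) := by
  intro a b c d hab hbc hcd hac hbd
  by_contra hnab
  obtain ⟨u, u', hau, huu', hub, hbu'⟩ := exists_step_across hac hab hbc hnab
  have hnub : ¬ ReflTransGen R u b := fun h => hnab (hau.trans h)
  obtain ⟨v, v', hbv, hvv', hvc, hcv'⟩ :=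
    exists_step_across hbd hbc hcd fun h => hnab (hac.trans (Std.Symm.symm _ _ h))
  have hnvc : ¬ ReflTransGen R v c := fun h =>
    hnab (hac.trans (Std.Symm.symm _ _ (hbv.trans h)))
  have hcu : ReflTransGen R c u := (Std.Symm.symm _ _ hac).trans hau
  exact (mem_Ioo_of_reflTransGen_of_crossing hR huu' hub hbu' hnub hbv).1.not_gt
    (mem_Ioo_of_reflTransGen_of_crossing hR hvv' hvc hcv' hnvc hcu).1

end Noncrossing

section Map

variable {α β : Type*} {ε : Setoid α} {f : α → β}

instance (ε : Setoid α) : Std.Symm ε.r := ⟨fun _ _ => ε.symm'⟩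

theorem map_rel_iff_reflTransGen {y z : β} :
    (ε.map f).r y z ↔ ReflTransGen (Relation.Map ε.r f f) y z := by
  rw [← EqvGen.eqvGen_eq_reflTransGen]
  rfl

theorem map_rel_of_rel {p q : α} (h : ε.r p q) : (ε.map f).r (f p) (f q) :=
  EqvGen.rel _ _ ⟨p, q, h, rfl, rfl⟩

theorem IsNoncrossing.map [LinearOrder α] [LinearOrder β] (hε : IsNoncrossing ε.r)
    (hf : Monotone f) : IsNoncrossing (ε.map f).r := by
  intro a b c d hab hbc hcd hac hbd
  rw [map_rel_iff_reflTransGen] at hac hbd ⊢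
  refine isNoncrossing_reflTransGen ?_ hab hbc hcd hac hbd
  rintro _ _ _ _ h₁₂ h₂₃ h₃₄ ⟨p₁, p₃, h₁₃, rfl, rfl⟩ ⟨p₂, p₄, h₂₄, rfl, rfl⟩
  exact .single ⟨p₁, p₂, hε (hf.reflect_lt h₁₂) (hf.reflect_lt h₂₃) (hf.reflect_lt h₃₄) h₁₃ h₂₄,
    rfl, rfl⟩

end Map

section Classes

variable {n : ℕ} {ε : Setoid (Fin n)} {x y : Fin n}

theorem rel_minCl (ε : Setoid (Fin n)) (x : Fin n) : ε.r x (minCl ε x) :=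
  (Finset.mem_filter.mp (Finset.min'_mem _ _)).2

theorem rel_maxCl (ε : Setoid (Fin n)) (x : Fin n) : ε.r x (maxCl ε x) :=
  (Finset.mem_filter.mp (Finset.max'_mem _ _)).2

theorem minCl_le_of_rel (h : ε.r x y) : minCl ε x ≤ y :=
  Finset.min'_le _ y (Finset.mem_filter.mpr ⟨Finset.mem_univ y, h⟩)

theorem le_maxCl_of_rel (h : ε.r x y) : y ≤ maxCl ε x :=
  Finset.le_max' _ y (Finset.mem_filter.mpr ⟨Finset.mem_univ y, h⟩)

theorem minCl_le (ε : Setoid (Fin n)) (x : Fin n) : minCl ε x ≤ x :=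
  minCl_le_of_rel (ε.refl' x)

theorem le_maxCl (ε : Setoid (Fin n)) (x : Fin n) : x ≤ maxCl ε x :=
  le_maxCl_of_rel (ε.refl' x)

theorem minCl_eq_minCl_iff : minCl ε x = minCl ε y ↔ ε.r x y :=
  ⟨fun h => ε.trans' (rel_minCl ε x) (h ▸ ε.symm' (rel_minCl ε y)), fun h =>
    le_antisymm (minCl_le_of_rel (ε.trans' h (rel_minCl ε y)))
      (minCl_le_of_rel (ε.trans' (ε.symm' h) (rel_minCl ε x)))⟩

theorem maxCl_congr (h : ε.r x y) : maxCl ε x = maxCl ε y :=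
  le_antisymm (le_maxCl_of_rel (ε.trans' (ε.symm' h) (rel_maxCl ε x)))
    (le_maxCl_of_rel (ε.trans' h (rel_maxCl ε y)))

theorem minCl_minCl (ε : Setoid (Fin n)) (x : Fin n) : minCl ε (minCl ε x) = minCl ε x :=
  minCl_eq_minCl_iff.2 (ε.symm' (rel_minCl ε x))

theorem clsS_congr (h : ε.r x y) : clsS ε x = clsS ε y :=
  Set.ext fun _ => ⟨ε.trans' (ε.symm' h), ε.trans' h⟩

theorem Unnested.congr (hx : Unnested ε x) (h : ε.r x y) : Unnested ε y := by
  rwa [Unnested, ← clsS_congr h]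

theorem IsPlanarEq.isNoncrossing (hpl : IsPlanarEq ε) : IsNoncrossing ε.r := by
  intro a b c d hab hbc hcd hac hbd
  by_contra hnab
  rcases hpl a b hnab with (h | h) | ⟨b₁, -, b₂, -, -, hcons, hall⟩ | ⟨c₁, -, c₂, -, -, hcons, hall⟩
  · exact (h c hac b (ε.refl' b)).not_gt hbc
  · exact (h a (ε.refl' a) b (ε.refl' b)).not_gt hab
  · exact hcons b (ε.refl' b) ⟨(hall a (ε.refl' a)).1.trans hab, hbc.trans (hall c hac).2⟩
  · exact hcons c hac ⟨(hall b (ε.refl' b)).1.trans hbc, hcd.trans (hall d hbd).2⟩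

/-- Unless `max X < min Y`, noncrossing puts no element of `X` in `[min Y, max Y]`, so `Y` lies
between the last element of `X` below it and the first above it. -/
theorem sepSets_or_nestedBy_of_minCl_lt (hε : IsNoncrossing ε.r) (hxy : ¬ ε.r x y)
    (hm : minCl ε x < minCl ε y) :
    SepSets (clsS ε x) (clsS ε y) ∨ NestedBy (clsS ε y) (clsS ε x) := by
  have hdisj : ∀ {c}, ε.r x c → ¬ ε.r y c := fun h₁ h₂ => hxy (ε.trans' h₁ (ε.symm' h₂))
  have hy : ε.r (minCl ε y) (maxCl ε y) := ε.trans' (ε.symm' (rel_minCl ε y)) (rel_maxCl ε y)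
  rcases lt_or_ge (maxCl ε x) (minCl ε y) with hsep | hle
  · exact .inl <| .inl fun a ha b hb =>
      (le_maxCl_of_rel ha).trans_lt (hsep.trans_le (minCl_le_of_rel hb))
  have hgap : ∀ {c}, ε.r x c → c < minCl ε y ∨ maxCl ε y < c := by
    intro c hc
    by_contra! h
    rcases h.1.lt_or_eq with h₁ | h₁
    · rcases h.2.lt_or_eq with h₂ | h₂
      · exact hxy (ε.trans' (rel_minCl ε x) (ε.trans'
          (hε hm h₁ h₂ (ε.trans' (ε.symm' (rel_minCl ε x)) hc) hy) (ε.symm' (rel_minCl ε y))))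
      · exact hdisj hc (h₂ ▸ rel_maxCl ε y)
    · exact hdisj hc (h₁ ▸ rel_minCl ε y)
  have hMx : maxCl ε y < maxCl ε x :=
    (hgap (rel_maxCl ε x)).resolve_left (not_lt.2 hle)
  let below := Finset.univ.filter fun c => ε.r x c ∧ c < minCl ε y
  let above := Finset.univ.filter fun c => ε.r x c ∧ maxCl ε y < c
  have hbelow : below.Nonempty := ⟨minCl ε x, by simpa [below] using ⟨rel_minCl ε x, hm⟩⟩
  have habove : above.Nonempty := ⟨maxCl ε x, by simpa [above] using ⟨rel_maxCl ε x, hMx⟩⟩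
  obtain ⟨hb₁, hb₁y⟩ : ε.r x (below.max' hbelow) ∧ below.max' hbelow < minCl ε y := by
    simpa [below] using below.max'_mem hbelow
  obtain ⟨hb₂, hb₂y⟩ : ε.r x (above.min' habove) ∧ maxCl ε y < above.min' habove := by
    simpa [above] using above.min'_mem habove
  refine .inr ⟨_, hb₁, _, hb₂, hb₁y.trans ((minCl_le ε y).trans_lt ((le_maxCl ε y).trans_lt
    hb₂y)), fun b hb ⟨h₁, h₂⟩ => ?_, fun a ha =>
    ⟨hb₁y.trans_le (minCl_le_of_rel ha), (le_maxCl_of_rel ha).trans_lt hb₂y⟩⟩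
  rcases hgap hb with h | h
  · exact h₁.not_ge (below.le_max' b (by simpa [below] using ⟨hb, h⟩))
  · exact h₂.not_ge (above.min'_le b (by simpa [above] using ⟨hb, h⟩))

theorem SepSets.symm {A B : Set (Fin n)} (h : SepSets A B) : SepSets B A :=
  (Or.imp (fun h b hb a ha => h a ha b hb) (fun h b hb a ha => h a ha b hb) h).symm

theorem IsNoncrossing.isPlanarEq (hε : IsNoncrossing ε.r) : IsPlanarEq ε := by
  intro x y hxy
  rcases lt_trichotomy (minCl ε x) (minCl ε y) with h | h | h
  · exact (sepSets_or_nestedBy_of_minCl_lt hε hxy h).imp_right .inr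
  · exact absurd (minCl_eq_minCl_iff.1 h) hxy
  · exact (sepSets_or_nestedBy_of_minCl_lt hε (fun h => hxy (ε.symm' h)) h).imp
      SepSets.symm .inl

theorem nestedBy_of_lt_of_lt (hpl : IsPlanarEq ε) {p q : Fin n} (hpq : ε.r p q)
    (hpx : p < x) (hxq : x < q) (hpx' : ¬ ε.r p x) : NestedBy (clsS ε x) (clsS ε p) := by
  rcases hpl x p (fun h => hpx' (ε.symm' h)) with (h | h) | h | ⟨g₁, -, g₂, -, -, hcons, hall⟩
  · exact absurd (h x (ε.refl' x) p (ε.refl' p)) hpx.not_gt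
  · exact absurd (h x (ε.refl' x) q hpq) hxq.not_gt
  · exact h
  · exact absurd ⟨(hall p (ε.refl' p)).1.trans hpx, hxq.trans (hall q hpq).2⟩ (hcons x (ε.refl' x))

end Classes

section Anchors

variable {n : ℕ} {ε : Setoid (Fin n)}

theorem mem_anchorsF {c : Fin n} : c ∈ anchorsF ε ↔ Unnested ε c ∧ minCl ε c = c := by
  simp [anchorsF]

/-- A class whose hull `[min, max]` has maximal length among the hulls containing `x` cannot
be nested, since nesting enlarges the hull. -/
theorem exists_mem_anchorsF_le_le_maxCl (x : Fin n) :
    ∃ c ∈ anchorsF ε, c ≤ x ∧ x ≤ maxCl ε c := by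
  let hulls := Finset.univ.filter fun y => minCl ε y ≤ x ∧ x ≤ maxCl ε y
  obtain ⟨y, hy, hmax⟩ := hulls.exists_max_image (fun y => (maxCl ε y : ℕ) - minCl ε y)
    ⟨x, by simpa [hulls] using ⟨minCl_le ε x, le_maxCl ε x⟩⟩
  simp only [hulls, Finset.mem_filter, Finset.mem_univ, true_and] at hy hmax
  have hunn : Unnested ε y := by
    rintro t ⟨b₁, hb₁, b₂, hb₂, -, -, hall⟩
    have h₁ := (minCl_le_of_rel hb₁).trans_lt (hall _ (rel_minCl ε y)).1
    have h₂ := (hall _ (rel_maxCl ε y)).2.trans_le (le_maxCl_of_rel hb₂)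
    have := hmax t ⟨h₁.le.trans hy.1, hy.2.trans h₂.le⟩
    rw [Fin.lt_def] at h₁ h₂
    omega
  exact ⟨minCl ε y, mem_anchorsF.2 ⟨hunn.congr (rel_minCl ε y), minCl_minCl ε y⟩, hy.1,
    hy.2.trans_eq (maxCl_congr (rel_minCl ε y))⟩

theorem maxCl_lt_of_mem_anchorsF (hpl : IsPlanarEq ε) {c d : Fin n} (hc : c ∈ anchorsF ε)
    (hd : d ∈ anchorsF ε) (hcd : c < d) : maxCl ε c < d := by
  obtain ⟨hcu, hcm⟩ := mem_anchorsF.1 hc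
  obtain ⟨hdu, hdm⟩ := mem_anchorsF.1 hd
  have hncd : ¬ ε.r c d := fun h => hcd.ne (hcm.symm.trans ((minCl_eq_minCl_iff.2 h).trans hdm))
  rcases hpl c d hncd with (h | h) | h | h
  · exact h _ (rel_maxCl ε c) d (ε.refl' d)
  · exact absurd (h c (ε.refl' c) d (ε.refl' d)) hcd.not_gt
  · exact absurd h (hcu d)
  · exact absurd h (hdu c)

variable [NeZero n]

theorem anchorBelow_eq (hpl : IsPlanarEq ε) {c z : Fin n} (hc : c ∈ anchorsF ε) (hcz : c ≤ z)
    (hzc : z ≤ maxCl ε c) : anchorBelow ε z = c := by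
  have hmem : c ∈ (anchorsF ε).filter (· ≤ z) := Finset.mem_filter.2 ⟨hc, hcz⟩
  rw [anchorBelow, dif_pos ⟨c, hmem⟩]
  refine le_antisymm (not_lt.1 fun hlt => ?_) (Finset.le_max' _ c hmem)
  obtain ⟨hd, hdz⟩ := Finset.mem_filter.1 (Finset.max'_mem _ ⟨c, hmem⟩)
  exact (maxCl_lt_of_mem_anchorsF hpl hc hd hlt).not_ge (hdz.trans hzc)

theorem anchorBelow_spec (hpl : IsPlanarEq ε) (x : Fin n) :
    anchorBelow ε x ∈ anchorsF ε ∧ anchorBelow ε x ≤ x ∧ x ≤ maxCl ε (anchorBelow ε x) := by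
  obtain ⟨c, hc, hcx, hxc⟩ := exists_mem_anchorsF_le_le_maxCl (ε := ε) x
  rw [anchorBelow_eq hpl hc hcx hxc]
  exact ⟨hc, hcx, hxc⟩

theorem anchorBelow_eq_minCl (hpl : IsPlanarEq ε) {z : Fin n} (hz : Unnested ε z) :
    anchorBelow ε z = minCl ε z :=
  anchorBelow_eq hpl (mem_anchorsF.2 ⟨hz.congr (rel_minCl ε z), minCl_minCl ε z⟩)
    (minCl_le ε z) ((le_maxCl ε z).trans_eq (maxCl_congr (rel_minCl ε z)))

end Anchors

section Products

variable {n : ℕ} {a b : Ptn n}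

theorem eqvGen_joinRel_upMid {p q : V n} (h : a.r p q) :
    EqvGen (joinRel a b) (upMid p) (upMid q) :=
  .rel _ _ (.inl ⟨p, q, h, rfl, rfl⟩)

theorem eqvGen_joinRel_midLow {p q : V n} (h : b.r p q) :
    EqvGen (joinRel a b) (midLow p) (midLow q) :=
  .rel _ _ (.inr ⟨p, q, h, rfl, rfl⟩)

theorem eq_of_pmul_rel {β : Type*} (I : W3 n → β)
    (ha : ∀ p q, a.r p q → I (upMid p) = I (upMid q))
    (hb : ∀ p q, b.r p q → I (midLow p) = I (midLow q)) {u v : V n} (h : (pmul a b).r u v) :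
    I (outer u) = I (outer v) :=
  Setoid.eqvGen_le (r := joinRel a b) (s := Setoid.ker I)
    (by rintro _ _ (⟨p, q, hpq, rfl, rfl⟩ | ⟨p, q, hpq, rfl, rfl⟩); exacts [ha p q hpq, hb p q hpq])
    h

theorem toPtn_pmul_eq_comap (f : Fin n → Fin n) (a : Ptn n) :
    pmul (toPtn f) a = a.comap (Sum.map f id) := by
  ext u v
  constructor
  · intro h
    let I : W3 n → Quotient a := Sum.elim (fun x => ⟦.inl (f x)⟧) fun w => ⟦w⟧
    have hI : ∀ w, I (outer w) = ⟦Sum.map f id w⟧ := by rintro (x | y) <;> rfl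
    have hup : ∀ p, I (upMid p) = ⟦.inl (Sum.elim f id p)⟧ := by rintro (x | m) <;> rfl
    have hlow : ∀ p, I (midLow p) = ⟦p⟧ := by rintro (m | y) <;> rfl
    have := eq_of_pmul_rel I (fun p q hpq => by rw [hup, hup, show Sum.elim f id p = _ from hpq])
      (fun p q hpq => by rw [hlow, hlow]; exact Quotient.sound hpq) h
    rw [hI, hI] at this
    exact (Quotient.exact this :)
  · intro h
    have hmid : ∀ w, EqvGen (joinRel (toPtn f) a) (outer w) (midLow (Sum.map f id w)) := by
      rintro (x | y)
      · exact eqvGen_joinRel_upMid (p := .inl x) (q := .inr (f x)) rfl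
      · exact .refl _
    exact ((hmid u).trans _ _ _ (eqvGen_joinRel_midLow h)).trans _ _ _ ((hmid v).symm _ _)

theorem cokerP_toPtn_pmul (f : Fin n → Fin n) (a : Ptn n) :
    cokerP (pmul (toPtn f) a) = cokerP a := by
  rw [toPtn_pmul_eq_comap]
  rfl

theorem pmul_toPtn_rel_inl_inr {f : Fin n → Fin n} {x y : Fin n} (h : a.r (.inl x) (.inr y)) :
    (pmul a (toPtn f)).r (.inl x) (.inr (f y)) :=
  (eqvGen_joinRel_upMid (q := .inr y) h).trans _ _ _
    (eqvGen_joinRel_midLow (p := .inl y) (q := .inr (f y)) rfl)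

theorem cokerP_pmul_toPtn {F f : Fin n → Fin n} (hF : ∀ x, a.r (.inl x) (.inr (F x))) :
    cokerP (pmul a (toPtn f)) = (cokerP a).map f := by
  ext y z
  constructor
  · intro h
    let I : W3 n → Quotient ((cokerP a).map f) :=
      Sum.elim (fun x => ⟦f (F x)⟧) (Sum.elim (fun m => ⟦f m⟧) fun y => ⟦y⟧)
    have hup : ∀ p, I (upMid p) = ⟦f (Sum.elim F id p)⟧ := by rintro (x | m) <;> rfl
    have hlow : ∀ p, I (midLow p) = ⟦Sum.elim f id p⟧ := by rintro (m | y) <;> rfl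
    have hg : ∀ p, a.r p (.inr (Sum.elim F id p)) := by rintro (x | m); exacts [hF x, a.refl' _]
    exact Quotient.exact <| eq_of_pmul_rel I
      (fun p q hpq => by
        rw [hup, hup]
        exact Quotient.sound (map_rel_of_rel (a.trans' (a.symm' (hg p)) (a.trans' hpq (hg q)))))
      (fun p q hpq => by rw [hlow, hlow, show Sum.elim f id p = _ from hpq]) h
  · refine fun h => Setoid.eqvGen_le (s := cokerP (pmul a (toPtn f))) ?_ h
    rintro _ _ ⟨p, q, hpq, rfl, rfl⟩
    exact ((eqvGen_joinRel_midLow (a := a) (b := toPtn f) (p := .inr (f p)) (q := .inl p)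
      rfl).trans _ _ _
      (eqvGen_joinRel_upMid (p := .inr p) (q := .inr q) hpq)).trans _ _ _
      (eqvGen_joinRel_midLow (p := .inl q) (q := .inr (f q)) rfl)

theorem eq_ker_of_transversal {F : Fin n → Fin n} (hF : ∀ x, a.r (.inl x) (.inr (F x))) :
    a = Setoid.ker (minCl (cokerP a) ∘ Sum.elim F id) := by
  have hg : ∀ p, a.r p (.inr (Sum.elim F id p)) := by rintro (x | m); exacts [hF x, a.refl' _]
  ext u v
  change _ ↔ minCl (cokerP a) _ = minCl (cokerP a) _
  rw [minCl_eq_minCl_iff]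
  exact ⟨fun h => a.trans' (a.symm' (hg u)) (a.trans' h (hg v)),
    fun h => a.trans' (hg u) (a.trans' h (a.symm' (hg v)))⟩

end Products

section DEta

variable {n : ℕ} [NeZero n] {ε : Setoid (Fin n)} {f : Fin n → Fin n}

theorem cokerP_dEta (ε : Setoid (Fin n)) : cokerP (dEta ε) = ε :=
  Setoid.ext fun _ _ => minCl_eq_minCl_iff

theorem dEta_rel_anchorBelow (hpl : IsPlanarEq ε) (x : Fin n) :
    (dEta ε).r (.inl x) (.inr (anchorBelow ε x)) :=
  (mem_anchorsF.1 (anchorBelow_spec hpl x).1).2.symm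

theorem toPtn_pmul_dEta (f : Fin n → Fin n) (ε : Setoid (Fin n)) :
    pmul (toPtn f) (dEta ε) = Setoid.ker (dMap ε ∘ Sum.map f id) :=
  toPtn_pmul_eq_comap f _

theorem eq_toPtn_pmul_dEta {a : Ptn n} {F f : Fin n → Fin n}
    (hF : ∀ x, a.r (.inl x) (.inr (F x)))
    (h : ∀ x, anchorBelow (cokerP a) (f x) = minCl (cokerP a) (F x)) :
    a = pmul (toPtn f) (dEta (cokerP a)) := by
  refine (eq_ker_of_transversal hF).trans (.trans ?_ (toPtn_pmul_dEta f _).symm)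
  congr 1
  funext u
  rcases u with x | y
  exacts [(h x).symm, rfl]

/-- A class of `ε.map f` nesting `f A` would need a single arc `(f p, f q)` jumping over it;
then `p < A ≤ max A < q` would nest the un-nested class of `A` inside that of `p`. -/
theorem unnested_map_anchorBelow (hpl : IsPlanarEq ε) (hf : Monotone f) (x : Fin n) :
    Unnested (ε.map f) (f (anchorBelow ε x)) := by
  set A := anchorBelow ε x
  have hA := (mem_anchorsF.1 (anchorBelow_spec hpl x).1).1
  rintro t ⟨d₁, hd₁, d₂, hd₂, hlt, hcons, hall⟩
  have hAM := map_rel_of_rel (f := f) (rel_maxCl ε A)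
  obtain ⟨u, u', hd₁u, ⟨p, q, hpq, rfl, rfl⟩, hu, hu'⟩ :=
    (map_rel_iff_reflTransGen.1 ((ε.map f).trans' ((ε.map f).symm' hd₁) hd₂)).exists_exit
      (P := (· ≤ d₁)) le_rfl hlt.not_ge
  have hq : d₂ ≤ f q := not_lt.1 fun h => hcons _
    ((ε.map f).trans' hd₁ (map_rel_iff_reflTransGen.2 (hd₁u.tail ⟨p, q, hpq, rfl, rfl⟩)))
    ⟨not_le.1 hu', h⟩
  have hpA : p < A := hf.reflect_lt (hu.trans_lt (hall _ ((ε.map f).refl' _)).1)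
  have hMq : maxCl ε A < q := hf.reflect_lt ((hall _ hAM).2.trans_le hq)
  have hnpA : ¬ ε.r p A := fun h =>
    hMq.not_ge (le_maxCl_of_rel (ε.trans' (ε.symm' h) hpq))
  exact hA p (nestedBy_of_lt_of_lt hpl hpq hpA ((le_maxCl ε A).trans_lt hMq) hnpA)

theorem anchorBelow_map (hpl : IsPlanarEq ε) (hf : Monotone f) (x : Fin n) :
    anchorBelow (ε.map f) (f x) = minCl (ε.map f) (f (anchorBelow ε x)) := by
  obtain ⟨-, hAx, hxA⟩ := anchorBelow_spec hpl x
  have hc := rel_minCl (ε.map f) (f (anchorBelow ε x))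
  refine anchorBelow_eq (hpl.isNoncrossing.map hf).isPlanarEq
    (mem_anchorsF.2 ⟨(unnested_map_anchorBelow hpl hf x).congr hc, minCl_minCl _ _⟩)
    ((minCl_le _ _).trans (hf hAx)) ((hf hxA).trans (le_maxCl_of_rel ?_))
  exact (ε.map f).trans' ((ε.map f).symm' hc) (map_rel_of_rel (rel_maxCl ε _))

theorem dEta_pmul_toPtn (hpl : IsPlanarEq ε) (hf : Monotone f) :
    pmul (dEta ε) (toPtn f) = pmul (toPtn f) (dEta (ε.map f)) := by
  have hcoker : cokerP (pmul (dEta ε) (toPtn f)) = ε.map f := by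
    rw [cokerP_pmul_toPtn (dEta_rel_anchorBelow hpl), cokerP_dEta]
  have := eq_toPtn_pmul_dEta (f := f) (fun x => pmul_toPtn_rel_inl_inr (dEta_rel_anchorBelow hpl x))
    (by rw [hcoker]; exact anchorBelow_map hpl hf)
  rwa [hcoker] at this

end DEta

section Factorization

variable {n : ℕ} {a : Ptn n}

theorem ordV_inl_lt_inl {x x' : Fin n} : ordV (.inl x : V n) < ordV (.inl x') ↔ x < x' :=
  Iff.rfl

theorem ordV_inl_lt_inr (x y : Fin n) : ordV (.inl x : V n) < ordV (.inr y) := by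
  simp only [ordV, Sum.elim_inl, Sum.elim_inr]
  omega

theorem ordV_inr_lt_inr {y y' : Fin n} : ordV (.inr y : V n) < ordV (.inr y') ↔ y' < y := by
  simp only [ordV, Sum.elim_inr, Fin.lt_def]
  omega

theorem Planar.isNoncrossing_cokerP (hpl : Planar a) : IsNoncrossing (cokerP a).r := by
  intro y₁ y₂ y₃ y₄ h₁₂ h₂₃ h₃₄ h₁₃ h₂₄
  have h₄₃ := hpl _ _ _ _ (ordV_inr_lt_inr.2 h₃₄) (ordV_inr_lt_inr.2 h₂₃) (ordV_inr_lt_inr.2 h₁₂)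
    (a.symm' h₂₄) (a.symm' h₁₃)
  exact a.trans' h₁₃ (a.trans' (a.symm' h₄₃) (a.symm' h₂₄))

theorem exists_monotone_eq_toPtn_pmul_dEta [NeZero n] (ha : a ∈ PPfd n) :
    ∃ f : Fin n → Fin n, Monotone f ∧ a = pmul (toPtn f) (dEta (cokerP a)) := by
  obtain ⟨hfd, hpl⟩ := ha
  set ε := cokerP a
  choose G hG using hfd
  let F x := minCl ε (G x)
  have hF : ∀ x, a.r (.inl x) (.inr (F x)) := fun x => a.trans' (hG x) (rel_minCl ε (G x))
  have hmono : Monotone F := by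
    refine fun x x' hle => not_lt.1 fun hlt => ?_
    have hxx' : a.r (.inl x) (.inl x') := by
      rcases hle.lt_or_eq with hle | rfl
      · exact hpl _ _ _ _ (ordV_inl_lt_inl.2 hle) (ordV_inl_lt_inr _ _) (ordV_inr_lt_inr.2 hlt)
          (hF x) (hF x')
      · exact a.refl' _
    exact hlt.ne (minCl_eq_minCl_iff.2 (a.trans' (a.symm' (hG x')) (a.trans' (a.symm' hxx')
      (hG x))))
  have hunn : ∀ x, Unnested ε (F x) := by
    rintro x t ⟨d₁, hd₁, d₂, hd₂, -, -, hall⟩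
    have hFx := hall (F x) (ε.refl' _)
    have hxd₂ := hpl _ _ _ _ (ordV_inl_lt_inr x d₂) (ordV_inr_lt_inr.2 hFx.2)
      (ordV_inr_lt_inr.2 hFx.1) (hF x) (ε.trans' (ε.symm' hd₂) hd₁)
    exact (hall d₂ (a.trans' (a.symm' (hF x)) hxd₂)).2.false
  exact ⟨F, hmono, eq_toPtn_pmul_dEta hF fun x =>
    anchorBelow_eq_minCl hpl.isNoncrossing_cokerP.isPlanarEq (hunn x)⟩

end Factorization

theorem stmt18_general (n : ℕ) [NeZero n] :
    (∀ f : Fin n → Fin n, Monotone f → ∀ u ∈ DSet n,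
      ∃ v ∈ DSet n, pmul u (toPtn f) = pmul (toPtn f) v) ∧
    (∀ u ∈ DSet n, ∀ v ∈ DSet n, ∀ f g : Fin n → Fin n, Monotone f → Monotone g →
      pmul (toPtn f) u = pmul (toPtn g) v → u = v) ∧
    (∀ a ∈ PPfd n, IsPlanarEq (cokerP a) ∧
      ∃ f : Fin n → Fin n, Monotone f ∧ a = pmul (toPtn f) (dEta (cokerP a))) := by
  refine ⟨?_, ?_, fun a ha => ⟨ha.2.isNoncrossing_cokerP.isPlanarEq,
    exists_monotone_eq_toPtn_pmul_dEta ha⟩⟩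
  · rintro f hf _ ⟨ε, hpl, rfl⟩
    exact ⟨_, ⟨ε.map f, (hpl.isNoncrossing.map hf).isPlanarEq, rfl⟩, dEta_pmul_toPtn hpl hf⟩
  · rintro _ ⟨ε₁, -, rfl⟩ _ ⟨ε₂, -, rfl⟩ f g - - h
    exact congrArg dEta (by simpa only [cokerP_toPtn_pmul, cokerP_dEta] using congrArg cokerP h)

/-- Proposition `prop:DnOn`.  With `O_n` the order-preserving
transformations (the planar transformations), viewed inside `PP_n^fd`:
(1) `(D_n, O_n)` is a strong right action pair in `PP_n^fd`:
    (A1) `D_n f ⊆ f D_n` for `f ∈ O_n`; (A2) `fu = gv ⟹ u = v` for `u,v ∈ D_n`,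
    `f,g ∈ O_n`;
(2) `PP_n^fd = O_n D_n`: every `a ∈ PP_n^fd` is `a = f d_η` with `f ∈ O_n` and
    `η = coker a` (a planar equivalence). -/
theorem stmt18 (n : ℕ) (hn : 2 ≤ n) [NeZero n] :
    (∀ f : Fin n → Fin n, Monotone f → ∀ u ∈ DSet n,
      ∃ v ∈ DSet n, pmul u (toPtn f) = pmul (toPtn f) v) ∧
    (∀ u ∈ DSet n, ∀ v ∈ DSet n, ∀ f g : Fin n → Fin n, Monotone f → Monotone g →
      pmul (toPtn f) u = pmul (toPtn g) v → u = v) ∧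
    (∀ a ∈ PPfd n, IsPlanarEq (cokerP a) ∧
      ∃ f : Fin n → Fin n, Monotone f ∧ a = pmul (toPtn f) (dEta (cokerP a))) :=
  stmt18_general n

end PaperFDP
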